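/- arXiv:2107.06878 — 2 statements merged into one kernel-verified Lean document; each statement's English description precedes it below -/
import Mathlib

section
/- With the dual system to {I, |0⟩⟨0|, |θ⟩⟨θ|} on ℂ² (with respect to the Hilbert–Schmidt inner product), where |θ⟩ = (cos θ, sin θ)ᵀ and θ ∈ (0, π/2), the dual elements M̃_{0|0} and M̃_{0|1} satisfy ‖M̃_{0|0}‖ = ‖M̃_{0|1}‖ = 1/(2 sin θ cos θ), where ‖·‖ is the operator norm. -/
set_option synthInstance.maxHeartbeats 1000000
set_option maxHeartbeats 1000000


open Real

/-- The projection onto `|0⟩ = (1,0)ᵀ`. -/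
def proj0 : Matrix (Fin 2) (Fin 2) ℂ := !![1, 0; 0, 0]

/-- The projection onto `|θ⟩ = (cos θ, sin θ)ᵀ`. -/
noncomputable def projTheta (θ : ℝ) : Matrix (Fin 2) (Fin 2) ℂ :=
  !![((Real.cos θ : ℂ)) ^ 2, (Real.cos θ : ℂ) * (Real.sin θ : ℂ);
     (Real.cos θ : ℂ) * (Real.sin θ : ℂ), ((Real.sin θ : ℂ)) ^ 2]

lemma norm_of_sq (A : Matrix (Fin 2) (Fin 2) ℂ) (hA : A.IsHermitian) (r : ℝ) (hr : 0 ≤ r)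
    (h : A * A = ((r^2 : ℝ) : ℂ) • 1) : ‖Matrix.toEuclideanCLM (𝕜 := ℂ) A‖ = r := by
  set T := Matrix.toEuclideanCLM (𝕜 := ℂ) A with hT
  have hsq : ‖T‖ * ‖T‖ = r * r := by
    have h1 : star T * T = ((r^2 : ℝ) : ℂ) • 1 := by
      rw [hT, ← map_star, ← map_mul]
      rw [show star A = A from hA, h]
      simp
    have := CStarRing.norm_star_mul_self (x := T)
    rw [h1] at this
    rw [← this, ← Algebra.algebraMap_eq_smul_one, norm_algebraMap']
    simp [sq, abs_of_nonneg hr]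
  nlinarith [norm_nonneg T]

lemma entries_aux (θ : ℝ) (M : Matrix (Fin 2) (Fin 2) ℂ)
    (hspan : M ∈ Submodule.span ℝ (Set.range ![(1 : Matrix (Fin 2) (Fin 2) ℂ), proj0, projTheta θ]))
    (t2 t3 : ℝ)
    (h1 : ((1 : Matrix (Fin 2) (Fin 2) ℂ) * M).trace = 0)
    (h2 : (proj0 * M).trace = (t2 : ℂ))
    (h3 : (projTheta θ * M).trace = (t3 : ℂ)) :
    ∃ m : ℝ, M = !![(t2 : ℂ), (m : ℂ); (m : ℂ), -(t2 : ℂ)] ∧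
      2 * Real.sin θ * Real.cos θ * m = t3 - (Real.cos θ ^ 2 - Real.sin θ ^ 2) * t2 := by
  rw [Submodule.mem_span_range_iff_exists_fun] at hspan
  obtain ⟨f, hf⟩ := hspan
  rw [Fin.sum_univ_three] at hf
  simp only [Matrix.cons_val_zero, Matrix.cons_val_one, Matrix.head_cons,
    Matrix.cons_val_two, Matrix.tail_cons] at hf
  have e01 : M 0 1 = ((f 2 * (Real.cos θ * Real.sin θ) : ℝ) : ℂ) := by
    rw [← hf]
    simp [proj0, projTheta, Matrix.one_apply, -Complex.ofReal_cos, -Complex.ofReal_sin]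
  have e10 : M 1 0 = ((f 2 * (Real.cos θ * Real.sin θ) : ℝ) : ℂ) := by
    rw [← hf]
    simp [proj0, projTheta, Matrix.one_apply, -Complex.ofReal_cos, -Complex.ofReal_sin]
  simp [Matrix.trace_fin_two, Matrix.mul_apply, Fin.sum_univ_two, proj0, projTheta,
    Matrix.vecMul, dotProduct, Matrix.vecHead, Matrix.vecTail,
    -Complex.ofReal_cos, -Complex.ofReal_sin] at h1 h2 h3
  have e11 : M 1 1 = -(t2 : ℂ) := by linear_combination h1 - h2
  refine ⟨f 2 * (Real.cos θ * Real.sin θ), ?_, ?_⟩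
  · ext i j
    fin_cases i <;> fin_cases j <;> simp only [Fin.zero_eta, Fin.mk_one, Fin.isValue,
      Matrix.cons_val', Matrix.cons_val_zero, Matrix.cons_val_one, Matrix.head_cons,
      Matrix.empty_val', Matrix.cons_val_fin_one, Matrix.head_fin_const, Matrix.of_apply]
    · exact h2
    · exact e01
    · exact e10
    · exact e11
  · have key : ((2 * Real.sin θ * Real.cos θ * (f 2 * (Real.cos θ * Real.sin θ)) : ℝ) : ℂ)
        = ((t3 - (Real.cos θ ^ 2 - Real.sin θ ^ 2) * t2 : ℝ) : ℂ) := by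
      push_cast [-Complex.ofReal_cos, -Complex.ofReal_sin] at e01 e10 ⊢
      linear_combination h3 - (Real.cos θ : ℂ)^2 * h2 - (Real.cos θ : ℂ) * (Real.sin θ : ℂ) * e10
        - (Real.cos θ : ℂ) * (Real.sin θ : ℂ) * e01 - (Real.sin θ : ℂ)^2 * e11
    exact_mod_cast key

/-- The dual elements `M̃_{0|0}` and `M̃_{0|1}` of the Hilbert–Schmidt dual system of
`{I, |0⟩⟨0|, |θ⟩⟨θ|}` have operator norm `1/(2 sin θ cos θ)`. -/
theorem dual_measurement_norm (θ : ℝ) (hθ : θ ∈ Set.Ioo 0 (π / 2))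
    (Itil M0til M1til : Matrix (Fin 2) (Fin 2) ℂ)
    (hHerm : ∀ j, (![Itil, M0til, M1til] j).IsHermitian)
    (hspan : ∀ j, ![Itil, M0til, M1til] j ∈
      Submodule.span ℝ (Set.range ![(1 : Matrix (Fin 2) (Fin 2) ℂ), proj0, projTheta θ]))
    (hdual : ∀ i j, ((![(1 : Matrix (Fin 2) (Fin 2) ℂ), proj0, projTheta θ] i) *
      (![Itil, M0til, M1til] j)).trace = if i = j then 1 else 0) :
    ‖Matrix.toEuclideanCLM (𝕜 := ℂ) M0til‖ = 1 / (2 * Real.sin θ * Real.cos θ) ∧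
    ‖Matrix.toEuclideanCLM (𝕜 := ℂ) M1til‖ = 1 / (2 * Real.sin θ * Real.cos θ) := by
  obtain ⟨hθ0, hθ1⟩ := hθ
  have hs : 0 < Real.sin θ := Real.sin_pos_of_pos_of_lt_pi hθ0 (by linarith [Real.pi_pos])
  have hc : 0 < Real.cos θ := Real.cos_pos_of_mem_Ioo ⟨by linarith, hθ1⟩
  have pyth := Real.sin_sq_add_cos_sq θ
  have hr0 : (0:ℝ) ≤ 1 / (2 * Real.sin θ * Real.cos θ) := by positivity
  have hsc : 2 * Real.sin θ * Real.cos θ ≠ 0 := by positivity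
  -- M0til
  have h00 := hdual 0 1
  have h01 := hdual 1 1
  have h02 := hdual 2 1
  norm_num [Matrix.cons_val_zero, Matrix.cons_val_one, Matrix.head_cons, Matrix.cons_val_two,
    Matrix.tail_cons, Fin.ext_iff] at h00 h01 h02
  obtain ⟨m0, hM0, hm0⟩ := entries_aux θ M0til (hspan 1) 1 0 (by rw [Matrix.one_mul]; exact_mod_cast h00)
    (by exact_mod_cast h01) (by exact_mod_cast h02)
  -- M1til
  have h10 := hdual 0 2
  have h11 := hdual 1 2
  have h12 := hdual 2 2
  norm_num [Matrix.cons_val_zero, Matrix.cons_val_one, Matrix.head_cons, Matrix.cons_val_two,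
    Matrix.tail_cons, Fin.ext_iff] at h10 h11 h12
  obtain ⟨m1, hM1, hm1⟩ := entries_aux θ M1til (hspan 2) 0 1 (by rw [Matrix.one_mul]; exact_mod_cast h10)
    (by exact_mod_cast h11) (by exact_mod_cast h12)
  constructor
  · refine norm_of_sq M0til (hHerm 1) _ hr0 ?_
    have hr2 : 1 + m0 ^ 2 = (Real.cos θ)⁻¹ ^ 2 * (Real.sin θ)⁻¹ ^ 2 * (1 / 4) := by
      field_simp
      nlinarith [hm0, pyth]
    have hr2c := congrArg (fun x : ℝ => (x : ℂ)) hr2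
    push_cast [-Complex.ofReal_cos, -Complex.ofReal_sin] at hr2c
    rw [hM0]
    ext i j
    fin_cases i <;> fin_cases j <;>
      simp [Matrix.mul_apply, Fin.sum_univ_two, Matrix.one_apply,
        -Complex.ofReal_cos, -Complex.ofReal_sin] <;>
      linear_combination hr2c
  · refine norm_of_sq M1til (hHerm 2) _ hr0 ?_
    have hr2 : m1 ^ 2 = (Real.cos θ)⁻¹ ^ 2 * (Real.sin θ)⁻¹ ^ 2 * (1 / 4) := by
      field_simp
      nlinarith [hm1, pyth]
    have hr2c := congrArg (fun x : ℝ => (x : ℂ)) hr2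
    push_cast [-Complex.ofReal_cos, -Complex.ofReal_sin] at hr2c
    rw [hM1]
    ext i j
    fin_cases i <;> fin_cases j <;>
      simp [Matrix.mul_apply, Fin.sum_univ_two, Matrix.one_apply,
        -Complex.ofReal_cos, -Complex.ofReal_sin] <;>
      linear_combination hr2c
end

section
/- With the dual system to {I, |0⟩⟨0|, |θ⟩⟨θ|} on ℂ² as above and θ ∈ (0, π/2), the dual element Ĩ satisfies ‖Ĩ‖ = 1/(2 cos θ) + 1/2, where ‖·‖ is the operator norm. -/
/-!
Writing `Ĩ = a I + b |0⟩⟨0| + c |θ⟩⟨θ|`, the duality conditions against `I, |0⟩⟨0|, |θ⟩⟨θ|` form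
the Gram system `2a + b + c = 1`, `a + b + c cos²θ = 0`, `a + b cos²θ + c = 0`, whose solution gives
`Ĩ = [[0, -tan θ / 2], [-tan θ / 2, 1]]`. Being Hermitian, `Ĩ` has operator norm equal to its spectral
radius; its eigenvalues are the roots `1/2 ± 1/(2 cos θ)` of `z² - z - tan²θ / 4`.
-/

open Real

theorem IsSelfAdjoint.exists_mem_spectrum_norm_eq {A : Type*} [CStarAlgebra A] [Nontrivial A]
    {a : A} (ha : IsSelfAdjoint a) : ∃ k ∈ spectrum ℂ a, ‖k‖ = ‖a‖ := by
  obtain ⟨k, hk, hka⟩ :=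
    spectrum.exists_nnnorm_eq_spectralRadius_of_nonempty (spectrum.nonempty a)
  rw [ha.spectralRadius_eq_nnnorm] at hka
  exact ⟨k, hk, congrArg NNReal.toReal (ENNReal.coe_injective hka)⟩

open scoped Matrix.Norms.L2Operator in
theorem Matrix.IsHermitian.norm_toEuclideanCLM_eq_of_mem_spectrum {n : Type*} [Fintype n]
    [DecidableEq n] [Nonempty n] {A : Matrix n n ℂ} (hA : A.IsHermitian) {r : ℝ}
    (hr : (r : ℂ) ∈ spectrum ℂ A) (hle : ∀ z ∈ spectrum ℂ A, ‖z‖ ≤ r) :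
    ‖Matrix.toEuclideanCLM (𝕜 := ℂ) A‖ = r := by
  rw [← Matrix.cstar_norm_def]
  obtain ⟨k, hk, hkA⟩ := hA.isSelfAdjoint.exists_mem_spectrum_norm_eq
  refine le_antisymm (hkA ▸ hle k hk) ?_
  calc r ≤ ‖(r : ℂ)‖ := by rw [Complex.norm_real, Real.norm_eq_abs]; exact le_abs_self r
    _ ≤ ‖A‖ := spectrum.norm_le_norm_of_mem hr

theorem Matrix.mem_spectrum_fin_two_iff {K : Type*} [Field K] (M : Matrix (Fin 2) (Fin 2) K)
    (z : K) : z ∈ spectrum K M ↔ z ^ 2 - M.trace * z + M.det = 0 := by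
  rw [mem_spectrum_iff_isRoot_charpoly, charpoly_fin_two]
  simp

theorem norm_toEuclideanCLM_of_sq_eq_add_sq (u r : ℝ) (hr : 1 / 2 ≤ r)
    (hquad : r ^ 2 = r + u ^ 2) :
    ‖Matrix.toEuclideanCLM (𝕜 := ℂ) !![0, -(u : ℂ); -(u : ℂ), 1]‖ = r := by
  have hquadC : (r : ℂ) ^ 2 = r + (u : ℂ) ^ 2 := by exact_mod_cast hquad
  have hspec : ∀ z, z ∈ spectrum ℂ !![0, -(u : ℂ); -(u : ℂ), 1] ↔
      (z - r) * (z - (1 - r)) = 0 := by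
    intro z
    rw [Matrix.mem_spectrum_fin_two_iff, Matrix.trace_fin_two_of, Matrix.det_fin_two_of]
    constructor <;> intro h
    · linear_combination h - hquadC
    · linear_combination h + hquadC
  have hherm : (!![0, -(u : ℂ); -(u : ℂ), 1]).IsHermitian := by
    ext i j
    fin_cases i <;> fin_cases j <;> simp
  refine hherm.norm_toEuclideanCLM_eq_of_mem_spectrum ((hspec _).2 (by ring)) fun z hz => ?_
  rcases mul_eq_zero.1 ((hspec z).1 hz) with h | h
  · rw [sub_eq_zero.1 h, Complex.norm_real, Real.norm_eq_abs, abs_of_nonneg (by linarith)]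
  · rw [sub_eq_zero.1 h, ← Complex.ofReal_one, ← Complex.ofReal_sub, Complex.norm_real,
      Real.norm_eq_abs, abs_le]
    constructor <;> linarith

@[simp] theorem trace_proj0 : proj0.trace = 1 := by
  simp [proj0, Matrix.trace_fin_two]

@[simp] theorem proj0_mul_proj0 : proj0 * proj0 = proj0 := by
  rw [proj0, Matrix.mul_fin_two]
  norm_num

@[simp] theorem trace_projTheta (θ : ℝ) : (projTheta θ).trace = 1 := by
  simp [projTheta, Matrix.trace_fin_two]

@[simp] theorem trace_proj0_mul_projTheta (θ : ℝ) :
    (proj0 * projTheta θ).trace = (cos θ ^ 2 : ℝ) := by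
  simp [proj0, projTheta, Matrix.trace_fin_two]

@[simp] theorem trace_projTheta_mul_proj0 (θ : ℝ) :
    (projTheta θ * proj0).trace = (cos θ ^ 2 : ℝ) := by
  rw [Matrix.trace_mul_comm, trace_proj0_mul_projTheta]

@[simp] theorem trace_projTheta_mul_projTheta (θ : ℝ) :
    (projTheta θ * projTheta θ).trace = 1 := by
  simp [projTheta, Matrix.trace_fin_two]
  have := congrArg (fun x : ℝ => (x : ℂ) ^ 2) (cos_sq_add_sin_sq θ)
  push_cast at this
  linear_combination this

theorem exists_eq_smul_add_of_mem_span {θ : ℝ} {M : Matrix (Fin 2) (Fin 2) ℂ}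
    (hM : M ∈ Submodule.span ℝ
      (Set.range ![(1 : Matrix (Fin 2) (Fin 2) ℂ), proj0, projTheta θ])) :
    ∃ a b c : ℝ, M = a • 1 + b • proj0 + c • projTheta θ := by
  obtain ⟨f, rfl⟩ := (Submodule.mem_span_range_iff_exists_fun ℝ).1 hM
  exact ⟨f 0, f 1, f 2, by simp [Fin.sum_univ_three]⟩

theorem dual_identity_eq {θ : ℝ} (hθ : θ ∈ Set.Ioo 0 (π / 2))
    {Itil : Matrix (Fin 2) (Fin 2) ℂ}
    (hspan : Itil ∈
      Submodule.span ℝ (Set.range ![(1 : Matrix (Fin 2) (Fin 2) ℂ), proj0, projTheta θ]))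
    (hdual : ∀ i, ((![(1 : Matrix (Fin 2) (Fin 2) ℂ), proj0, projTheta θ] i) *
      Itil).trace = if i = 0 then 1 else 0) :
    Itil = !![0, -((tan θ / 2 : ℝ) : ℂ); -((tan θ / 2 : ℝ) : ℂ), 1] := by
  obtain ⟨a, b, c, rfl⟩ := exists_eq_smul_add_of_mem_span hspan
  have hgram : ∀ i, ((![(1 : Matrix (Fin 2) (Fin 2) ℂ), proj0, projTheta θ] i) *
      (a • 1 + b • proj0 + c • projTheta θ)).trace =
      ((![2 * a + b + c, a + b + c * cos θ ^ 2, a + b * cos θ ^ 2 + c] i : ℝ) : ℂ) := by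
    intro i
    fin_cases i <;>
      simp [Matrix.mul_add, Matrix.trace_add, Matrix.trace_smul, Complex.real_smul]
    ring
  have h0 : 2 * a + b + c = 1 :=
    Complex.ofReal_injective <| by simpa using (hgram 0).symm.trans (hdual 0)
  have h1 : a + b + c * cos θ ^ 2 = 0 :=
    Complex.ofReal_injective <| by simpa using (hgram 1).symm.trans (hdual 1)
  have h2 : a + b * cos θ ^ 2 + c = 0 :=
    Complex.ofReal_injective <| by simpa using (hgram 2).symm.trans (hdual 2)
  have hsin : sin θ ^ 2 ≠ 0 :=
    (pow_pos (sin_pos_of_pos_of_lt_pi hθ.1 (by linarith [hθ.2, pi_pos])) 2).ne'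
  have hbc : b = c := by
    have : (b - c) * sin θ ^ 2 = 0 := by
      linear_combination h1 - h2 + (b - c) * sin_sq_add_cos_sq θ
    exact sub_eq_zero.1 ((mul_eq_zero.1 this).resolve_right hsin)
  subst hbc
  have hb : b * cos θ ^ 2 = -1 / 2 := by linarith
  have h01 : b * (cos θ * sin θ) = -(tan θ / 2) := by
    have hcos : cos θ ≠ 0 := (cos_pos_of_mem_Ioo ⟨by linarith [hθ.1, pi_pos], hθ.2⟩).ne'
    rw [tan_eq_sin_div_cos]
    field_simp
    linear_combination 2 * sin θ * hb
  have h11 : a + b * sin θ ^ 2 = 1 := by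
    linear_combination h0 / 2 - hb + b * sin_sq_add_cos_sq θ
  ext i j
  fin_cases i <;> fin_cases j <;> simp [proj0, projTheta]
  · simpa using congrArg Complex.ofReal h1
  · simpa using congrArg Complex.ofReal h01
  · simpa using congrArg Complex.ofReal h01
  · simpa using congrArg Complex.ofReal h11

theorem dual_identity_norm_general (θ : ℝ) (hθ : θ ∈ Set.Ioo 0 (π / 2))
    (Itil M0til M1til : Matrix (Fin 2) (Fin 2) ℂ)
    (hspan : ∀ j, ![Itil, M0til, M1til] j ∈
      Submodule.span ℝ (Set.range ![(1 : Matrix (Fin 2) (Fin 2) ℂ), proj0, projTheta θ]))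
    (hdual : ∀ i j, ((![(1 : Matrix (Fin 2) (Fin 2) ℂ), proj0, projTheta θ] i) *
      (![Itil, M0til, M1til] j)).trace = if i = j then 1 else 0) :
    ‖Matrix.toEuclideanCLM (𝕜 := ℂ) Itil‖ = 1 / (2 * Real.cos θ) + 1 / 2 := by
  rw [dual_identity_eq (Itil := Itil) hθ (hspan 0) fun i => by simpa using hdual i 0]
  have hcos : 0 < cos θ := cos_pos_of_mem_Ioo ⟨by linarith [hθ.1, pi_pos], hθ.2⟩
  apply norm_toEuclideanCLM_of_sq_eq_add_sq
  · have : 0 < 1 / (2 * cos θ) := by positivity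
    linarith
  · rw [tan_eq_sin_div_cos]
    field_simp
    linear_combination -(sin_sq_add_cos_sq θ)

/-- The dual element `Ĩ` of the Hilbert–Schmidt dual system of `{I, |0⟩⟨0|, |θ⟩⟨θ|}`
has operator norm `1/(2 cos θ) + 1/2`. -/
theorem dual_identity_norm (θ : ℝ) (hθ : θ ∈ Set.Ioo 0 (π / 2))
    (Itil M0til M1til : Matrix (Fin 2) (Fin 2) ℂ)
    (hHerm : ∀ j, (![Itil, M0til, M1til] j).IsHermitian)
    (hspan : ∀ j, ![Itil, M0til, M1til] j ∈
      Submodule.span ℝ (Set.range ![(1 : Matrix (Fin 2) (Fin 2) ℂ), proj0, projTheta θ]))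
    (hdual : ∀ i j, ((![(1 : Matrix (Fin 2) (Fin 2) ℂ), proj0, projTheta θ] i) *
      (![Itil, M0til, M1til] j)).trace = if i = j then 1 else 0) :
    ‖Matrix.toEuclideanCLM (𝕜 := ℂ) Itil‖ = 1 / (2 * Real.cos θ) + 1 / 2 :=
  dual_identity_norm_general θ hθ Itil M0til M1til hspan hdual
end
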